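/- Let X be a finite species set and 𝒯 a set of MUL-trees with label sets contained in X. For any integer k, there exists a duplication tree on X with exactly k duplication nodes that is consistent with every MUL-tree in 𝒯 if and only if there exists a beaded tree on X with exactly k beads that weakly displays every MUL-tree in 𝒯. -/

import Mathlib

/-!
Common formal framework for MUL-trees, phylogenetic networks, beaded trees,
duplication trees, weak embeddings and related operations, following
van Iersel, Janssen, Jones, Murakami, Zeh,
"Polynomial-Time Algorithms for Phylogenetic Inference Problems involving
duplication and reticulation".

All graphs are directed multigraphs on natural-number vertices, given by a
finite vertex set, an edge-multiplicity function and a (partial) leaf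
labelling by species (also natural numbers).
-/

open scoped Classical

structure DG where
  verts : Finset ℕ
  mult : ℕ → ℕ → ℕ
  label : ℕ → Option ℕ

namespace DG

/-- An arc is a pair of endpoints together with the index of the parallel copy. -/
abbrev Arc := ℕ × ℕ × ℕ

def Adj (G : DG) (u v : ℕ) : Prop := 0 < G.mult u v

def outDeg (G : DG) (u : ℕ) : ℕ := ∑ v ∈ G.verts, G.mult u v
def inDeg (G : DG) (v : ℕ) : ℕ := ∑ u ∈ G.verts, G.mult u v

/-- `G.Reaches u v` : `u` is an ancestor of `v` (possibly `u = v`). -/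
def Reaches (G : DG) : ℕ → ℕ → Prop := Relation.ReflTransGen G.Adj
/-- `G.SReaches u v` : `u` is a strict ancestor of `v` (in an acyclic graph). -/
def SReaches (G : DG) : ℕ → ℕ → Prop := Relation.TransGen G.Adj
def Acyclic (G : DG) : Prop := ∀ v, ¬ G.SReaches v v

def IsRoot (G : DG) (v : ℕ) : Prop := v ∈ G.verts ∧ G.inDeg v = 0 ∧ G.outDeg v = 1
def IsLeafNode (G : DG) (v : ℕ) : Prop := v ∈ G.verts ∧ G.inDeg v = 1 ∧ G.outDeg v = 0
def IsTreeNode (G : DG) (v : ℕ) : Prop := v ∈ G.verts ∧ G.inDeg v = 1 ∧ G.outDeg v = 2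
def IsRetic (G : DG) (v : ℕ) : Prop := v ∈ G.verts ∧ G.inDeg v = 2 ∧ G.outDeg v = 1
def IsDupNode (G : DG) (v : ℕ) : Prop := v ∈ G.verts ∧ G.inDeg v = 1 ∧ G.outDeg v = 1

/-- The reticulation number: the number of reticulation nodes. -/
def reticNum (G : DG) : ℕ := (G.verts.filter (fun v => G.inDeg v = 2 ∧ G.outDeg v = 1)).card
/-- The duplication number: the number of duplication nodes. -/
def dupNum (G : DG) : ℕ := (G.verts.filter (fun v => G.inDeg v = 1 ∧ G.outDeg v = 1)).card
/-- The number of beads (counted by their bottom nodes). -/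
noncomputable def beadNum (G : DG) : ℕ :=
  (G.verts.filter (fun v => ∃ u ∈ G.verts, G.mult u v = 2)).card

def Supported (G : DG) : Prop := ∀ u v, G.Adj u v → u ∈ G.verts ∧ v ∈ G.verts
/-- Exactly the leaves carry labels. -/
def LabelsOnLeaves (G : DG) : Prop := ∀ v, (∃ x, G.label v = some x) ↔ G.IsLeafNode v

/-- The number of leaves (= labelled nodes). -/
def numLeaves (G : DG) : ℕ := (G.verts.filter (fun v => (G.label v).isSome)).card

/-- A multi-labelled tree (MUL-tree) with labels contained in `X`. -/
structure IsMulTree (X : Finset ℕ) (G : DG) : Prop where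
  root : ∃! r, G.IsRoot r
  nodes : ∀ v ∈ G.verts, G.IsRoot v ∨ G.IsTreeNode v ∨ G.IsLeafNode v
  acyclic : G.Acyclic
  simple : ∀ u v, G.mult u v ≤ 1
  supported : G.Supported
  labels : G.LabelsOnLeaves
  labelsSub : ∀ v x, G.label v = some x → x ∈ X

/-- A rooted binary phylogenetic network on `X` (parallel edges allowed). -/
structure IsNetwork (X : Finset ℕ) (G : DG) : Prop where
  root : ∃! r, G.IsRoot r
  nodes : ∀ v ∈ G.verts, G.IsRoot v ∨ G.IsTreeNode v ∨ G.IsRetic v ∨ G.IsLeafNode v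
  acyclic : G.Acyclic
  supported : G.Supported
  labels : G.LabelsOnLeaves
  labelsSub : ∀ v x, G.label v = some x → x ∈ X
  labelsOnto : ∀ x ∈ X, ∃! v, G.label v = some x

/-- A duplication tree on `X`. -/
structure IsDupTree (X : Finset ℕ) (G : DG) : Prop where
  root : ∃! r, G.IsRoot r
  nodes : ∀ v ∈ G.verts, G.IsRoot v ∨ G.IsTreeNode v ∨ G.IsDupNode v ∨ G.IsLeafNode v
  acyclic : G.Acyclic
  simple : ∀ u v, G.mult u v ≤ 1
  supported : G.Supported
  labels : G.LabelsOnLeaves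
  labelsSub : ∀ v x, G.label v = some x → x ∈ X
  labelsOnto : ∀ x ∈ X, ∃! v, G.label v = some x

/-- A beaded tree: a phylogenetic network in which every reticulation node is
the bottom node of a bead (a pair of parallel edges). -/
def IsBeadedTree (X : Finset ℕ) (G : DG) : Prop :=
  IsNetwork X G ∧ ∀ v ∈ G.verts, G.inDeg v = 2 → ∃ u, G.mult u v = 2

def ArcOK (G : DG) (e : Arc) : Prop := e.2.2 < G.mult e.1 e.2.1

/-- `G.IsWalk p a b` : `p` is a (nonempty) directed path of arcs from `a` to `b`. -/
def IsWalk (G : DG) (p : List Arc) (a b : ℕ) : Prop :=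
  p ≠ [] ∧ (∀ e ∈ p, G.ArcOK e) ∧
  List.Chain' (fun e f : Arc => e.2.1 = f.1) p ∧
  p.head?.map Prod.fst = some a ∧
  p.getLast?.map (fun e => e.2.1) = some b

/-- `v` is a node visited by the walk `p`. -/
def OnWalk (p : List Arc) (v : ℕ) : Prop := ∃ e ∈ p, e.1 = v ∨ e.2.1 = v

/-- A weak embedding of a MUL-tree `T` into a network `N`: nodes map to nodes,
edges map to directed paths and the two paths out of an internal node start
with different out-edges. -/
def WeakEmbedding (T N : DG) (h : ℕ → ℕ) (hE : ℕ → ℕ → List Arc) : Prop :=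
  (∀ v ∈ T.verts, h v ∈ N.verts) ∧
  (∀ v, T.IsLeafNode v → N.IsLeafNode (h v) ∧ N.label (h v) = T.label v) ∧
  (∀ u v, T.Adj u v → N.IsWalk (hE u v) (h u) (h v)) ∧
  (∀ x y y', T.Adj x y → T.Adj x y' → y ≠ y' → (hE x y).head? ≠ (hE x y').head?)

/-- `N.Displays T` : `N` weakly displays `T`. -/
def Displays (N T : DG) : Prop := ∃ h hE, WeakEmbedding T N h hE

/-- `x` is a least common ancestor of `y` and `z`. -/
def IsLCA (G : DG) (x y z : ℕ) : Prop :=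
  G.Reaches x y ∧ G.Reaches x z ∧
  ∀ w, G.SReaches x w → ¬ (G.Reaches w y ∧ G.Reaches w z)

/-- A duplication mapping from a MUL-tree `T` to a duplication tree `D`. -/
def DupMapping (T D : DG) (M : ℕ → ℕ) : Prop :=
  (∀ v, T.IsLeafNode v → D.IsLeafNode (M v) ∧ D.label (M v) = T.label v) ∧
  (∀ u v, T.Adj u v → D.SReaches (M u) (M v)) ∧
  (∀ u v v', T.Adj u v → T.Adj u v' → v ≠ v' →
    D.IsLCA (M u) (M v) (M v') ∨ D.IsDupNode (M u))

/-- `D.ConsistentWith T` : there is a duplication mapping from `T` to `D`. -/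
def ConsistentWith (D T : DG) : Prop := ∃ M, DupMapping T D M

/-- A solution to Beaded Tree on `𝒯`: a beaded tree on `X` weakly displaying
every MUL-tree of `𝒯`. -/
def Solution (X : Finset ℕ) (Ts : Set DG) (B : DG) : Prop :=
  IsBeadedTree X B ∧ ∀ T ∈ Ts, B.Displays T

/-- An optimal solution: minimum reticulation number among all solutions. -/
def OptSolution (X : Finset ℕ) (Ts : Set DG) (B : DG) : Prop :=
  Solution X Ts B ∧ ∀ B', Solution X Ts B' → B.reticNum ≤ B'.reticNum

/-- Number of beads traversed by a walk. -/
def beadsOnWalk (G : DG) (p : List Arc) : ℕ :=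
  p.countP (fun e => decide (G.mult e.1 e.2.1 = 2))

/-- Number of duplication nodes traversed by a walk (as arc sources). -/
def dupsOnWalk (G : DG) (p : List Arc) : ℕ :=
  p.countP (fun e => decide (G.inDeg e.1 = 1 ∧ G.outDeg e.1 = 1))

/-- The bead depth: the maximum number of beads on any directed path. -/
noncomputable def beadDepth (G : DG) : ℕ :=
  sSup {n | ∃ p a b, G.IsWalk p a b ∧ G.beadsOnWalk p = n}

/-- A solution to Beaded Tree Depth of minimum bead depth. -/
def DepthOptSolution (X : Finset ℕ) (Ts : Set DG) (B : DG) : Prop :=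
  Solution X Ts B ∧ ∀ B', Solution X Ts B' → B.beadDepth ≤ B'.beadDepth

/-- The child of the root is the top node of a bead. -/
def HasBeadAtRoot (G : DG) : Prop :=
  ∃ r u v, G.IsRoot r ∧ G.Adj r u ∧ G.mult u v = 2

/-- `B` is obtained from `B'` by inserting a new bead `(u,v)` between the root
`r` of `B'` and its child `a`.  Equivalently, `B'` is obtained from `B` by
deleting `u` and `v` and adding an edge from the root to the child of `v`. -/
def AddBeadAtRoot (B' B : DG) : Prop :=
  ∃ r a u v, B'.IsRoot r ∧ B'.Adj r a ∧ u ∉ B'.verts ∧ v ∉ B'.verts ∧ u ≠ v ∧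
    B.verts = insert u (insert v B'.verts) ∧
    B.label = (fun w => if w = u ∨ w = v then none else B'.label w) ∧
    B.mult = (fun s t =>
      if s = r ∧ t = a then 0
      else if s = r ∧ t = u then 1
      else if s = u ∧ t = v then 2
      else if s = v ∧ t = a then 1
      else if s = u ∨ s = v ∨ t = u ∨ t = v then 0
      else B'.mult s t)

/-- `N` is obtained by joining `N1` and `N2`: the two roots are identified into
a single node `u`, which becomes the child of a new root `r`.  The embeddings
`f1`, `f2` realise the copies of `N1` and `N2` inside `N`. -/
def IsJoinOf (N N1 N2 : DG) : Prop :=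
  ∃ (f1 f2 : ℕ → ℕ) (r u : ℕ),
    N.IsRoot r ∧ u ∈ N.verts ∧ N.mult r u = 1 ∧
    Set.InjOn f1 N1.verts ∧ Set.InjOn f2 N2.verts ∧
    (∀ v, N1.IsRoot v → f1 v = u) ∧ (∀ v, N2.IsRoot v → f2 v = u) ∧
    (∀ w, w ∈ N.verts ↔ (w = r ∨ (∃ v ∈ N1.verts, f1 v = w) ∨ (∃ v ∈ N2.verts, f2 v = w))) ∧
    (∀ v1 ∈ N1.verts, ∀ v2 ∈ N2.verts, f1 v1 = f2 v2 → N1.IsRoot v1 ∧ N2.IsRoot v2) ∧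
    (∀ v ∈ N1.verts, f1 v ≠ r) ∧ (∀ v ∈ N2.verts, f2 v ≠ r) ∧
    (∀ a ∈ N1.verts, ∀ b ∈ N1.verts, N.mult (f1 a) (f1 b) = N1.mult a b) ∧
    (∀ a ∈ N2.verts, ∀ b ∈ N2.verts, N.mult (f2 a) (f2 b) = N2.mult a b) ∧
    (∀ a b, N.Adj a b →
      (a = r ∧ b = u) ∨
      (∃ a' ∈ N1.verts, ∃ b' ∈ N1.verts, f1 a' = a ∧ f1 b' = b ∧ N1.Adj a' b') ∨
      (∃ a' ∈ N2.verts, ∃ b' ∈ N2.verts, f2 a' = a ∧ f2 b' = b ∧ N2.Adj a' b')) ∧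
    (∀ v ∈ N1.verts, N.label (f1 v) = N1.label v) ∧
    (∀ v ∈ N2.verts, N.label (f2 v) = N2.label v) ∧
    N.label r = none

/-- Delete a node and all incident edges. -/
def deleteNode (G : DG) (v : ℕ) : DG where
  verts := G.verts.erase v
  mult := fun a b => if a = v ∨ b = v then 0 else G.mult a b
  label := fun a => if a = v then none else G.label a

/-- Suppress an in-degree-1 out-degree-1 node `v` with parent `p` and child `c`. -/
def suppressNode (G : DG) (v p c : ℕ) : DG where
  verts := G.verts.erase v
  mult := fun a b =>
    if a = v ∨ b = v then 0
    else if a = p ∧ b = c then G.mult a b + 1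
    else G.mult a b
  label := fun a => if a = v then none else G.label a

/-- One step of the restriction procedure for label set `S`: delete a leaf
labelled in `S` or an unlabelled node of out-degree 0, or suppress an
unlabelled node of in-degree 1 and out-degree 1. -/
inductive RStep (S : Finset ℕ) : DG → DG → Prop
  | del (G : DG) (v : ℕ) : v ∈ G.verts →
      ((∃ x ∈ S, G.label v = some x) ∨ (G.label v = none ∧ G.outDeg v = 0)) →
      RStep S G (G.deleteNode v)
  | suppress (G : DG) (v p c : ℕ) : v ∈ G.verts → G.label v = none →
      G.mult p v = 1 → G.inDeg v = 1 → G.mult v c = 1 → G.outDeg v = 1 →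
      RStep S G (G.suppressNode v p c)

/-- `Restricts S G G'` : `G' = G ∖ S`, i.e. `G'` is obtained from `G` by
deleting all leaves labelled in `S` and exhaustively deleting unlabelled nodes
of out-degree 0 and suppressing in-degree-1 out-degree-1 nodes. -/
def Restricts (S : Finset ℕ) (G G' : DG) : Prop :=
  Relation.ReflTransGen (RStep S) G G' ∧ ∀ H, ¬ RStep S G' H

/-- `𝒯 ∖ S` for a set of MUL-trees (empty results discarded). -/
def SetRestrict (S : Finset ℕ) (Ts : Set DG) : Set DG :=
  {T' | T'.verts.Nonempty ∧ ∃ T ∈ Ts, Restricts S T T'}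

/-- The member of the depth-1 forest of `T` keeping `y` and discarding the
subtree rooted at `y'` (here `r` is the root, `x` its child, `y,y'` the
children of `x`, which is suppressed). -/
noncomputable def f1del (T : DG) (r x y y' : ℕ) : DG where
  verts := (T.verts.filter (fun v => ¬ T.Reaches y' v)).erase x
  mult := fun a b =>
    if a = r ∧ b = y then 1
    else if a = x ∨ b = x ∨ T.Reaches y' a ∨ T.Reaches y' b then 0
    else T.mult a b
  label := fun v => if v = x ∨ T.Reaches y' v then none else T.label v

/-- `T'` is one of the two members of the depth-1 forest `F1(T)`. -/
def InF1 (T T' : DG) : Prop :=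
  ∃ r x y y', T.IsRoot r ∧ T.Adj r x ∧ T.Adj x y ∧ T.Adj x y' ∧ y ≠ y' ∧
    T' = f1del T r x y y'

/-- `F1(𝒯)`. -/
def F1Set (Ts : Set DG) : Set DG := {T' | ∃ T ∈ Ts, InF1 T T'}

/-- Two species labels occur in the same member of `F1(𝒯)`. -/
def SplitRel (Ts : Set DG) (a b : ℕ) : Prop :=
  ∃ T' ∈ F1Set Ts, (∃ u, T'.label u = some a) ∧ (∃ v, T'.label v = some b)

/-- `S` is one of the classes of the split partition of `X` for `𝒯`. -/
def SplitPart (X : Finset ℕ) (Ts : Set DG) (S : Finset ℕ) : Prop :=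
  ∃ a ∈ X, S = X.filter (fun b => Relation.EqvGen (SplitRel Ts) a b)

end DG

/-!
Duplication nodes and beads encode the same thing. Replacing every duplication node `d` of a
duplication tree by a bead (a tree node with two parallel arcs into a new reticulation) gives a
beaded tree with as many beads as duplication nodes, and contracting every bead of a beaded tree
to its bottom node is the inverse operation.

A duplication mapping `M` becomes a weak embedding by lifting each edge `u → v` of the MUL-tree
to a walk from `M u` to `M v`: if `M u` is a duplication node, the two walks out of `u` leave
through the two parallel arcs of its bead; otherwise they leave through different children of
`M u`, since `M u` is the least common ancestor of the images of the children of `u`.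
Conversely, composing a weak embedding with the contraction gives a duplication mapping. A node
embedded at a bead top lands on a duplication node. At any other node the two walks leave
through arcs to different nodes, whose images under the contraction are distinct children, and
in a tree a node is the least common ancestor of anything below two of its distinct children.
Edges stay strict because no node of a MUL-tree other than the root is embedded at a bead
bottom, whose single out-arc cannot start two different walks.
-/

namespace DG

section Graph

variable {G : DG}

lemma ArcOK.adj {e : Arc} (he : G.ArcOK e) : G.Adj e.1 e.2.1 :=
  lt_of_le_of_lt (Nat.zero_le _) he

lemma mem_verts_of_sreaches (hS : G.Supported) {a b : ℕ} (h : G.SReaches a b) :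
    a ∈ G.verts := by
  obtain ⟨c, hac, -⟩ := Relation.TransGen.head'_iff.mp h
  exact (hS a c hac).1

lemma mult_le_outDeg (hS : G.Supported) (a b : ℕ) : G.mult a b ≤ G.outDeg a := by
  by_cases h : G.Adj a b
  · exact Finset.single_le_sum (f := G.mult a) (fun _ _ => Nat.zero_le _) (hS a b h).2
  · unfold Adj at h; omega

lemma mult_le_inDeg (hS : G.Supported) (a b : ℕ) : G.mult a b ≤ G.inDeg b := by
  by_cases h : G.Adj a b
  · exact Finset.single_le_sum (f := fun v => G.mult v b) (fun _ _ => Nat.zero_le _) (hS a b h).1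
  · unfold Adj at h; omega

lemma mult_add_mult_le_outDeg (hS : G.Supported) {a b c : ℕ} (hbc : b ≠ c)
    (hb : G.Adj a b) (hc : G.Adj a c) : G.mult a b + G.mult a c ≤ G.outDeg a :=
  Finset.add_le_sum (fun _ _ => Nat.zero_le _) (hS a b hb).2 (hS a c hc).2 hbc

lemma mult_add_mult_le_inDeg (hS : G.Supported) {a b c : ℕ} (hab : a ≠ b)
    (ha : G.Adj a c) (hb : G.Adj b c) : G.mult a c + G.mult b c ≤ G.inDeg c :=
  Finset.add_le_sum (f := fun v => G.mult v c) (fun _ _ => Nat.zero_le _)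
    (hS a c ha).1 (hS b c hb).1 hab

lemma exists_adj_of_outDeg_pos {a : ℕ} (h : 0 < G.outDeg a) : ∃ b, G.Adj a b := by
  obtain ⟨b, -, hb⟩ := Finset.exists_ne_zero_of_sum_ne_zero (Nat.pos_iff_ne_zero.mp h)
  exact ⟨b, Nat.pos_of_ne_zero hb⟩

lemma exists_ne_adj_of_outDeg_eq_two (hS : G.Supported) (hsimple : ∀ u v, G.mult u v ≤ 1)
    {a : ℕ} (h : G.outDeg a = 2) : ∃ b c, b ≠ c ∧ G.Adj a b ∧ G.Adj a c := by
  obtain ⟨b, hb⟩ := exists_adj_of_outDeg_pos (G := G) (a := a) (by omega)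
  have hrest := Finset.add_sum_erase G.verts (G.mult a) (hS a b hb).2
  have := hsimple a b
  unfold outDeg at h
  obtain ⟨c, hc, hbc⟩ := Finset.exists_ne_zero_of_sum_ne_zero (s := G.verts.erase b)
    (f := G.mult a) (by omega)
  exact ⟨b, c, (Finset.ne_of_mem_erase hc).symm, hb, Nat.pos_of_ne_zero hbc⟩

lemma eq_or_eq_of_adj_of_outDeg_le_two (hS : G.Supported) {a b c d : ℕ}
    (h2 : G.outDeg a ≤ 2) (hbc : b ≠ c) (hb : G.Adj a b) (hc : G.Adj a c) (hd : G.Adj a d) :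
    d = b ∨ d = c := by
  by_contra! hne
  have hsub : ({d, b, c} : Finset ℕ) ⊆ G.verts := by
    simp only [Finset.insert_subset_iff, Finset.singleton_subset_iff]
    exact ⟨(hS a d hd).2, (hS a b hb).2, (hS a c hc).2⟩
  have := Finset.sum_le_sum_of_subset (f := G.mult a) hsub
  rw [Finset.sum_insert (by simp [hne.1, hne.2]), Finset.sum_pair hbc] at this
  unfold Adj at hb hc hd
  unfold outDeg at h2
  omega

lemma eq_of_arcOK_of_outDeg_eq_one (hS : G.Supported) {a : ℕ} (h1 : G.outDeg a = 1)
    {e f : Arc} (he : G.ArcOK e) (hf : G.ArcOK f) (hea : e.1 = a) (hfa : f.1 = a) : e = f := by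
  have hb : e.2.1 = f.2.1 := by
    by_contra hne
    have := mult_add_mult_le_outDeg hS hne (hea ▸ he.adj) (hfa ▸ hf.adj)
    have := hea ▸ he.adj
    have := hfa ▸ hf.adj
    unfold Adj at *
    omega
  have := mult_le_outDeg hS a e.2.1
  unfold ArcOK at he hf
  rw [hea] at he
  rw [hfa, ← hb] at hf
  exact Prod.ext (hea.trans hfa.symm) (Prod.ext hb (by omega))

lemma eq_of_adj_of_adj_of_inDeg_le_one (hS : G.Supported) (hin : ∀ v ∈ G.verts, G.inDeg v ≤ 1)
    {a b c : ℕ} (ha : G.Adj a c) (hb : G.Adj b c) : a = b := by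
  by_contra hab
  have := mult_add_mult_le_inDeg hS hab ha hb
  have := hin c (hS a c ha).2
  unfold Adj at ha hb
  omega

lemma reaches_total_of_inDeg_le_one (hS : G.Supported) (hin : ∀ v ∈ G.verts, G.inDeg v ≤ 1)
    {a b c : ℕ} (hac : G.Reaches a c) (hbc : G.Reaches b c) :
    G.Reaches a b ∨ G.Reaches b a := by
  induction hac generalizing b with
  | refl => exact Or.inr hbc
  | @tail d c had hdc ih =>
    rcases hbc.cases_tail with rfl | ⟨e, hbe, hec⟩
    · exact Or.inl (had.tail hdc)
    · rw [eq_of_adj_of_adj_of_inDeg_le_one hS hin hec hdc] at hbe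
      exact ih hbe

lemma not_reaches_of_adj_of_adj (hS : G.Supported) (hin : ∀ v ∈ G.verts, G.inDeg v ≤ 1)
    (hA : G.Acyclic) {a b c : ℕ} (hb : G.Adj a b) (hc : G.Adj a c) (hbc : b ≠ c) :
    ¬ G.Reaches b c := by
  intro hr
  rcases hr.cases_tail with rfl | ⟨d, hbd, hdc⟩
  · exact hbc rfl
  · rw [eq_of_adj_of_adj_of_inDeg_le_one hS hin hdc hc] at hbd
    exact hA a (Relation.TransGen.head' hb hbd)

lemma isLCA_of_adj_of_adj (hS : G.Supported) (hin : ∀ v ∈ G.verts, G.inDeg v ≤ 1)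
    (hA : G.Acyclic) {a b c y z : ℕ} (hb : G.Adj a b) (hc : G.Adj a c) (hbc : b ≠ c)
    (hy : G.Reaches b y) (hz : G.Reaches c z) : G.IsLCA a y z := by
  refine ⟨.head hb hy, .head hc hz, fun w haw ⟨hwy, hwz⟩ => ?_⟩
  have below : ∀ {d t}, G.Adj a d → G.Reaches d t → G.Reaches w t → G.Reaches d w := by
    intro d t hd hdt hwt
    rcases reaches_total_of_inDeg_le_one hS hin hdt hwt with hdw | hwd
    · exact hdw
    rcases hwd.cases_tail with rfl | ⟨e, hwe, hed⟩
    · exact .refl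
    · rw [eq_of_adj_of_adj_of_inDeg_le_one hS hin hed hd] at hwe
      exact absurd (haw.trans_left hwe) (hA a)
  rcases reaches_total_of_inDeg_le_one hS hin (below hb hy hwy) (below hc hz hwz) with h | h
  · exact not_reaches_of_adj_of_adj hS hin hA hb hc hbc h
  · exact not_reaches_of_adj_of_adj hS hin hA hc hb hbc.symm h

lemma isWalk_singleton {e : Arc} (he : G.ArcOK e) : G.IsWalk [e] e.1 e.2.1 :=
  ⟨List.cons_ne_nil _ _, by simpa using he, List.isChain_singleton _, rfl, rfl⟩

lemma IsWalk.append {p q : List Arc} {a b c : ℕ} (hp : G.IsWalk p a b) (hq : G.IsWalk q b c) :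
    G.IsWalk (p ++ q) a c := by
  obtain ⟨hp0, hpok, hpch, hphd, hplast⟩ := hp
  obtain ⟨hq0, hqok, hqch, hqhd, hqlast⟩ := hq
  refine ⟨by simp [hp0], fun e he => ?_, List.isChain_append.mpr ⟨hpch, hqch, ?_⟩,
    by rwa [List.head?_append_of_ne_nil _ hp0], by rwa [List.getLast?_append_of_ne_nil _ hq0]⟩
  · rcases List.mem_append.mp he with h | h
    exacts [hpok e h, hqok e h]
  · intro e he f hf
    rw [he] at hplast
    rw [hf] at hqhd
    simp only [Option.map_some, Option.some.injEq] at hplast hqhd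
    rw [hplast, hqhd]

lemma IsWalk.exists_cons {p : List Arc} {a b : ℕ} (hw : G.IsWalk p a b) :
    ∃ e rest, p = e :: rest ∧ G.ArcOK e ∧ e.1 = a ∧ (e.2.1 = b ∨ G.IsWalk rest e.2.1 b) := by
  obtain ⟨h0, hok, hch, hhd, hlast⟩ := hw
  obtain ⟨e, rest, rfl⟩ := List.exists_cons_of_ne_nil h0
  simp only [List.head?_cons, Option.map_some, Option.some.injEq] at hhd
  refine ⟨e, rest, rfl, hok e List.mem_cons_self, hhd, ?_⟩
  cases rest with
  | nil =>
    simp only [List.getLast?_singleton, Option.map_some, Option.some.injEq] at hlast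
    exact Or.inl hlast
  | cons f rest =>
    obtain ⟨hef, hch⟩ := List.isChain_cons_cons.mp hch
    refine Or.inr ⟨List.cons_ne_nil _ _, fun x hx => hok x (List.mem_cons_of_mem _ hx), hch,
      by simp [hef], ?_⟩
    rwa [List.getLast?_cons_cons] at hlast

lemma IsWalk.sreaches {p : List Arc} {a b : ℕ} (hw : G.IsWalk p a b) : G.SReaches a b := by
  induction p generalizing a with
  | nil => exact absurd rfl hw.1
  | cons e rest ih =>
    obtain ⟨e, rest, he, hok, rfl, hend⟩ := hw.exists_cons
    obtain ⟨rfl, rfl⟩ := List.cons_eq_cons.mp he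
    rcases hend with rfl | hrest
    · exact .single hok.adj
    · exact .head hok.adj (ih hrest)

lemma IsWalk.exists_head? {p : List Arc} {a b : ℕ} (hw : G.IsWalk p a b) :
    ∃ e, p.head? = some e ∧ G.ArcOK e ∧ e.1 = a ∧ G.Reaches e.2.1 b := by
  obtain ⟨e, rest, rfl, hok, hea, hend⟩ := hw.exists_cons
  refine ⟨e, rfl, hok, hea, ?_⟩
  rcases hend with h | hrest
  · exact h ▸ .refl
  · exact hrest.sreaches.to_reflTransGen

end Graph

section Degrees

variable {X : Finset ℕ}

lemma IsDupTree.inDeg_le_one {D : DG} (hD : IsDupTree X D) {v : ℕ} (hv : v ∈ D.verts) :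
    D.inDeg v ≤ 1 := by
  rcases hD.nodes v hv with h | h | h | h <;> have := h.2.1 <;> omega

lemma IsMulTree.outDeg_le_two {T : DG} (hT : IsMulTree X T) {v : ℕ}
    (hv : v ∈ T.verts) : T.outDeg v ≤ 2 := by
  rcases hT.nodes v hv with h | h | h <;> have := h.2.2 <;> omega

lemma mult_le_two {N : DG} (hN : IsNetwork X N) (a b : ℕ) : N.mult a b ≤ 2 := by
  by_contra h
  have := mult_le_inDeg hN.supported a b
  rcases hN.nodes b (hN.supported a b (by unfold Adj; omega)).2 with h | h | h | h <;>
    have := h.2.1 <;> omega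

end Degrees

section Beadify

/-- A duplication node `d` of `D` becomes the bead `2 * d ⇉ 2 * d + 1`; every other node `v`
becomes `2 * v`. -/
noncomputable def beadify (D : DG) : DG where
  verts := D.verts.image (2 * ·) ∪
    (D.verts.filter fun v => D.inDeg v = 1 ∧ D.outDeg v = 1).image (2 * · + 1)
  mult := fun a b =>
    if b = a + 1 ∧ a % 2 = 0 ∧ D.IsDupNode (a / 2) then 2
    else if b % 2 = 0 ∧ ((a % 2 = 0 ∧ ¬ D.IsDupNode (a / 2)) ∨ (a % 2 = 1 ∧ D.IsDupNode (a / 2)))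
      then D.mult (a / 2) (b / 2)
    else 0
  label := fun a => if a % 2 = 0 then D.label (a / 2) else none

variable {D : DG}

lemma two_mul_mem_beadify {v : ℕ} : 2 * v ∈ (beadify D).verts ↔ v ∈ D.verts := by
  simp only [beadify, Finset.mem_union, Finset.mem_image, Finset.mem_filter]
  constructor
  · rintro (⟨w, hw, hwv⟩ | ⟨w, -, hwv⟩)
    · rwa [show v = w by omega]
    · omega
  · exact fun hv => Or.inl ⟨v, hv, rfl⟩

lemma two_mul_add_one_mem_beadify {d : ℕ} : 2 * d + 1 ∈ (beadify D).verts ↔ D.IsDupNode d := by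
  simp only [beadify, Finset.mem_union, Finset.mem_image, Finset.mem_filter]
  constructor
  · rintro (⟨w, -, hw⟩ | ⟨w, hw, hwd⟩)
    · omega
    · rw [show d = w by omega]
      exact hw
  · exact fun hd => Or.inr ⟨d, hd, rfl⟩

lemma beadify_mult_two_mul_two_mul (p q : ℕ) :
    (beadify D).mult (2 * p) (2 * q) = if D.IsDupNode p then 0 else D.mult p q := by
  simp only [beadify, Nat.mul_mod_right, Nat.mul_div_cancel_left _ two_pos]
  split_ifs <;> first | rfl | omega | simp_all

lemma beadify_mult_two_mul_add_one_two_mul (d q : ℕ) :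
    (beadify D).mult (2 * d + 1) (2 * q) = if D.IsDupNode d then D.mult d q else 0 := by
  have hd : (2 * d + 1) / 2 = d := by omega
  simp only [beadify, hd, Nat.mul_mod_right, Nat.mul_div_cancel_left _ two_pos]
  split_ifs <;> first | rfl | omega | simp_all

lemma beadify_mult_two_mul_two_mul_add_one (p d : ℕ) :
    (beadify D).mult (2 * p) (2 * d + 1) = if p = d ∧ D.IsDupNode d then 2 else 0 := by
  simp only [beadify, Nat.mul_mod_right, Nat.mul_div_cancel_left _ two_pos]
  by_cases h : p = d
  · subst h
    simp
  · split_ifs <;> omega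

lemma beadify_mult_two_mul_add_one_two_mul_add_one (p d : ℕ) :
    (beadify D).mult (2 * p + 1) (2 * d + 1) = 0 := by
  simp only [beadify]
  split_ifs <;> omega

lemma beadify_label_two_mul (v : ℕ) : (beadify D).label (2 * v) = D.label v := by
  simp [beadify]

lemma beadify_label_two_mul_add_one (v : ℕ) : (beadify D).label (2 * v + 1) = none := by
  simp [beadify, Nat.add_mod]

lemma beadify_label_eq_some {w x : ℕ} :
    (beadify D).label w = some x ↔ ∃ v, w = 2 * v ∧ D.label v = some x := by
  obtain ⟨v, rfl | rfl⟩ := Nat.even_or_odd' w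
  · rw [beadify_label_two_mul]
    exact ⟨fun h => ⟨v, rfl, h⟩, fun ⟨u, hu, h⟩ => by rwa [show v = u by omega]⟩
  · rw [beadify_label_two_mul_add_one]
    exact ⟨nofun, fun ⟨u, hu, _⟩ => by omega⟩

lemma beadify_adj_cases {a b : ℕ} (h : (beadify D).Adj a b) :
    (∃ d, D.IsDupNode d ∧ a = 2 * d ∧ b = 2 * d + 1) ∨
      ∃ p q, D.Adj p q ∧ b = 2 * q ∧
        (a = 2 * p ∧ ¬ D.IsDupNode p ∨ a = 2 * p + 1 ∧ D.IsDupNode p) := by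
  unfold Adj beadify at h
  dsimp only at h
  split_ifs at h with hbead hedge
  · exact Or.inl ⟨a / 2, hbead.2.2, by omega, by omega⟩
  · refine Or.inr ⟨a / 2, b / 2, h, by omega, ?_⟩
    rcases hedge.2 with ⟨ha, hd⟩ | ⟨ha, hd⟩
    exacts [Or.inl ⟨by omega, hd⟩, Or.inr ⟨by omega, hd⟩]
  · omega

lemma beadify_sum (f : ℕ → ℕ) :
    ∑ w ∈ (beadify D).verts, f w =
      ∑ v ∈ D.verts, f (2 * v) +
        ∑ d ∈ D.verts.filter (fun v => D.inDeg v = 1 ∧ D.outDeg v = 1), f (2 * d + 1) := by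
  rw [beadify, Finset.sum_union, Finset.sum_image (by intro _ _ _ _ h; beta_reduce at h; omega),
    Finset.sum_image (by intro _ _ _ _ h; beta_reduce at h; omega)]
  simp only [Finset.disjoint_left, Finset.mem_image]
  rintro _ ⟨v, -, rfl⟩ ⟨d, -, h⟩
  omega

lemma beadify_outDeg_two_mul (p : ℕ) :
    (beadify D).outDeg (2 * p) = if D.IsDupNode p then 2 else D.outDeg p := by
  unfold outDeg
  rw [beadify_sum]
  simp only [beadify_mult_two_mul_two_mul, beadify_mult_two_mul_two_mul_add_one]
  by_cases h : D.IsDupNode p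
  · rw [Finset.sum_eq_single_of_mem p (Finset.mem_filter.mpr ⟨h.1, h.2⟩)]
    · simp [h]
    · intro d _ hdp
      rw [if_neg fun hd => hdp hd.1.symm]
  · simp only [h, if_false, add_eq_left]
    refine Finset.sum_eq_zero fun d _ => if_neg ?_
    rintro ⟨rfl, hd⟩
    exact h hd

lemma beadify_outDeg_two_mul_add_one (d : ℕ) :
    (beadify D).outDeg (2 * d + 1) = if D.IsDupNode d then D.outDeg d else 0 := by
  unfold outDeg
  rw [beadify_sum]
  simp only [beadify_mult_two_mul_add_one_two_mul, beadify_mult_two_mul_add_one_two_mul_add_one]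
  split_ifs <;> simp

lemma beadify_inDeg_two_mul (q : ℕ) : (beadify D).inDeg (2 * q) = D.inDeg q := by
  unfold inDeg
  rw [beadify_sum]
  simp only [beadify_mult_two_mul_two_mul, beadify_mult_two_mul_add_one_two_mul]
  rw [Finset.sum_filter, ← Finset.sum_add_distrib]
  refine Finset.sum_congr rfl fun v hv => ?_
  by_cases h : D.IsDupNode v
  · simp [h, h.2]
  · simp [h, show ¬ (D.inDeg v = 1 ∧ D.outDeg v = 1) from fun h' => h ⟨hv, h'⟩]

lemma beadify_inDeg_two_mul_add_one (d : ℕ) :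
    (beadify D).inDeg (2 * d + 1) = if D.IsDupNode d then 2 else 0 := by
  unfold inDeg
  rw [beadify_sum]
  simp only [beadify_mult_two_mul_two_mul_add_one, beadify_mult_two_mul_add_one_two_mul_add_one]
  by_cases h : D.IsDupNode d
  · simp [h, h.1]
  · simp [h]

lemma beadify_supported (hS : D.Supported) : (beadify D).Supported := by
  intro a b hab
  rcases beadify_adj_cases hab with ⟨d, hd, rfl, rfl⟩ | ⟨p, q, hpq, rfl, hp⟩
  · exact ⟨two_mul_mem_beadify.2 hd.1, two_mul_add_one_mem_beadify.2 hd⟩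
  · refine ⟨?_, two_mul_mem_beadify.2 (hS p q hpq).2⟩
    rcases hp with ⟨rfl, -⟩ | ⟨rfl, hd⟩
    exacts [two_mul_mem_beadify.2 (hS p q hpq).1, two_mul_add_one_mem_beadify.2 hd]

lemma sreaches_of_beadify_sreaches {a b : ℕ} (h : (beadify D).SReaches a b) :
    D.SReaches (a / 2) (b / 2) ∨ (b = a + 1 ∧ a % 2 = 0) := by
  induction h with
  | single hab =>
    rcases beadify_adj_cases hab with ⟨d, -, rfl, rfl⟩ | ⟨p, q, hpq, rfl, hp⟩
    · exact Or.inr ⟨rfl, by omega⟩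
    · have hp2 : a / 2 = p := by omega
      rw [hp2, show 2 * q / 2 = q by omega]
      exact Or.inl (.single hpq)
  | @tail b c _ hbc ih =>
    rcases beadify_adj_cases hbc with ⟨d, -, rfl, rfl⟩ | ⟨p, q, hpq, rfl, hp⟩
    · rcases ih with h | h
      · rw [show 2 * d / 2 = d by omega] at h
        rw [show (2 * d + 1) / 2 = d by omega]
        exact Or.inl h
      · omega
    · have hbp : b / 2 = p := by omega
      rw [show 2 * q / 2 = q by omega]
      rcases ih with h | ⟨rfl, ha⟩
      · exact Or.inl (h.tail (hbp ▸ hpq))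
      · rw [show a / 2 = p by omega]
        exact Or.inl (.single hpq)

lemma beadify_acyclic (hA : D.Acyclic) : (beadify D).Acyclic := by
  intro v hv
  rcases sreaches_of_beadify_sreaches hv with h | ⟨h, -⟩
  · exact hA _ h
  · omega

lemma beadify_isRoot_two_mul {v : ℕ} : (beadify D).IsRoot (2 * v) ↔ D.IsRoot v := by
  unfold IsRoot
  rw [two_mul_mem_beadify, beadify_inDeg_two_mul, beadify_outDeg_two_mul]
  split_ifs with h
  · have := h.2.1
    constructor <;> rintro ⟨-, h0, -⟩ <;> omega
  · rfl

lemma beadify_isLeafNode_two_mul {v : ℕ} : (beadify D).IsLeafNode (2 * v) ↔ D.IsLeafNode v := by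
  unfold IsLeafNode
  rw [two_mul_mem_beadify, beadify_inDeg_two_mul, beadify_outDeg_two_mul]
  split_ifs with h
  · have := h.2.2
    constructor <;> rintro ⟨-, -, h0⟩ <;> simp_all
  · rfl

lemma beadify_isTreeNode_two_mul {v : ℕ} (h : D.IsTreeNode v ∨ D.IsDupNode v) :
    (beadify D).IsTreeNode (2 * v) := by
  unfold IsTreeNode
  rw [two_mul_mem_beadify, beadify_inDeg_two_mul, beadify_outDeg_two_mul]
  rcases h with h | h
  · have hd : ¬ D.IsDupNode v := by
      intro hd
      have := hd.2.2
      have := h.2.2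
      omega
    rwa [if_neg hd]
  · rw [if_pos h]
    exact ⟨h.1, h.2.1, rfl⟩

lemma beadify_isRetic_two_mul_add_one {d : ℕ} (h : 2 * d + 1 ∈ (beadify D).verts) :
    (beadify D).IsRetic (2 * d + 1) := by
  have hd := two_mul_add_one_mem_beadify.1 h
  refine ⟨h, ?_, ?_⟩
  · rw [beadify_inDeg_two_mul_add_one, if_pos hd]
  · rw [beadify_outDeg_two_mul_add_one, if_pos hd, hd.2.2]

lemma beadify_mult_eq_two (hsimple : ∀ u v, D.mult u v ≤ 1) {a b : ℕ}
    (h : (beadify D).mult a b = 2) : ∃ d, D.IsDupNode d ∧ b = 2 * d + 1 := by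
  obtain ⟨p, rfl | rfl⟩ := Nat.even_or_odd' a <;> obtain ⟨q, rfl | rfl⟩ := Nat.even_or_odd' b
  · rw [beadify_mult_two_mul_two_mul] at h
    have := hsimple p q
    split_ifs at h
    omega
  · rw [beadify_mult_two_mul_two_mul_add_one] at h
    split_ifs at h with hpq
    · exact ⟨q, hpq.2, rfl⟩
  · rw [beadify_mult_two_mul_add_one_two_mul] at h
    have := hsimple p q
    split_ifs at h
    omega
  · rw [beadify_mult_two_mul_add_one_two_mul_add_one] at h
    omega

variable {X : Finset ℕ}

theorem beadify_isBeadedTree (hD : IsDupTree X D) : IsBeadedTree X (beadify D) := by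
  obtain ⟨r, hr, hru⟩ := hD.root
  refine ⟨⟨⟨2 * r, beadify_isRoot_two_mul.2 hr, fun w hw => ?_⟩, fun w hw => ?_,
    beadify_acyclic hD.acyclic, beadify_supported hD.supported, fun w => ?_,
    fun w x hx => ?_, fun x hx => ?_⟩, fun w hw hin => ?_⟩
  · obtain ⟨v, rfl | rfl⟩ := Nat.even_or_odd' w
    · rw [hru v (beadify_isRoot_two_mul.1 hw)]
    · have := (beadify_isRetic_two_mul_add_one hw.1).2.1
      have := hw.2.1
      omega
  · obtain ⟨v, rfl | rfl⟩ := Nat.even_or_odd' w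
    · rcases hD.nodes v (two_mul_mem_beadify.1 hw) with h | h | h | h
      · exact Or.inl (beadify_isRoot_two_mul.2 h)
      · exact Or.inr (Or.inl (beadify_isTreeNode_two_mul (Or.inl h)))
      · exact Or.inr (Or.inl (beadify_isTreeNode_two_mul (Or.inr h)))
      · exact Or.inr (Or.inr (Or.inr (beadify_isLeafNode_two_mul.2 h)))
    · exact Or.inr (Or.inr (Or.inl (beadify_isRetic_two_mul_add_one hw)))
  · obtain ⟨v, rfl | rfl⟩ := Nat.even_or_odd' w
    · rw [beadify_label_two_mul, beadify_isLeafNode_two_mul]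
      exact hD.labels v
    · rw [beadify_label_two_mul_add_one]
      refine ⟨fun ⟨x, hx⟩ => (nomatch hx), fun hl => ?_⟩
      have := (beadify_isRetic_two_mul_add_one hl.1).2.1
      have := hl.2.1
      omega
  · obtain ⟨v, rfl, hv⟩ := beadify_label_eq_some.1 hx
    exact hD.labelsSub v x hv
  · obtain ⟨v, hv, hvu⟩ := hD.labelsOnto x hx
    refine ⟨2 * v, (beadify_label_two_mul v).trans hv, fun w hw => ?_⟩
    obtain ⟨u, rfl, hu⟩ := beadify_label_eq_some.1 hw
    rw [hvu u hu]
  · obtain ⟨v, rfl | rfl⟩ := Nat.even_or_odd' w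
    · rw [beadify_inDeg_two_mul] at hin
      have := hD.inDeg_le_one (two_mul_mem_beadify.1 hw)
      omega
    · refine ⟨2 * v, ?_⟩
      rw [beadify_mult_two_mul_two_mul_add_one, if_pos ⟨rfl, two_mul_add_one_mem_beadify.1 hw⟩]

theorem beadify_beadNum (hD : IsDupTree X D) : (beadify D).beadNum = D.dupNum := by
  have hbeads :
      (beadify D).verts.filter (fun w => ∃ u ∈ (beadify D).verts, (beadify D).mult u w = 2) =
        (D.verts.filter fun v => D.inDeg v = 1 ∧ D.outDeg v = 1).image (2 * · + 1) := by
    ext w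
    simp only [Finset.mem_filter, Finset.mem_image]
    constructor
    · rintro ⟨-, u, -, hu⟩
      obtain ⟨d, hd, rfl⟩ := beadify_mult_eq_two hD.simple hu
      exact ⟨d, hd, rfl⟩
    · rintro ⟨d, hd, rfl⟩
      refine ⟨two_mul_add_one_mem_beadify.2 hd, 2 * d, two_mul_mem_beadify.2 hd.1, ?_⟩
      rw [beadify_mult_two_mul_two_mul_add_one, if_pos ⟨rfl, hd⟩]
  rw [beadNum, hbeads, Finset.card_image_of_injective _ fun a b h => by omega]
  rfl

/-- At a duplication node `a`, `c` selects which of the two parallel arcs of its bead is used. -/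
noncomputable def liftArcs (D : DG) (c a b : ℕ) : List Arc :=
  if D.IsDupNode a then [(2 * a, 2 * a + 1, c), (2 * a + 1, 2 * b, 0)] else [(2 * a, 2 * b, 0)]

lemma liftArcs_head? (c a b : ℕ) :
    (liftArcs D c a b).head? =
      some (if D.IsDupNode a then (2 * a, 2 * a + 1, c) else (2 * a, 2 * b, 0)) := by
  unfold liftArcs
  split_ifs <;> rfl

lemma isWalk_liftArcs {c a b : ℕ} (hc : c < 2) (hab : D.Adj a b) :
    (beadify D).IsWalk (liftArcs D c a b) (2 * a) (2 * b) := by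
  unfold liftArcs
  split_ifs with hd
  · refine (isWalk_singleton (e := (2 * a, 2 * a + 1, c)) ?_).append
      (isWalk_singleton (e := (2 * a + 1, 2 * b, 0)) ?_)
    · show c < _
      rwa [beadify_mult_two_mul_two_mul_add_one, if_pos ⟨rfl, hd⟩]
    · show 0 < _
      rwa [beadify_mult_two_mul_add_one_two_mul, if_pos hd]
  · exact isWalk_singleton (show 0 < _ by rwa [beadify_mult_two_mul_two_mul, if_neg hd])

lemma exists_isWalk_beadify {a b : ℕ} (h : D.SReaches a b) :
    ∃ p, (beadify D).IsWalk p (2 * a) (2 * b) := by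
  induction h using Relation.TransGen.head_induction_on with
  | single hab => exact ⟨_, isWalk_liftArcs zero_lt_two hab⟩
  | head hac _ ih =>
    obtain ⟨p, hp⟩ := ih
    exact ⟨_, (isWalk_liftArcs zero_lt_two hac).append hp⟩

lemma exists_isWalk_beadify_head? {c a b : ℕ} (hc : c < 2) (hab : D.SReaches a b) :
    ∃ w p, D.Adj a w ∧ D.Reaches w b ∧ (beadify D).IsWalk p (2 * a) (2 * b) ∧
      p.head? = (liftArcs D c a w).head? := by
  obtain ⟨w, haw, hwb⟩ := Relation.TransGen.head'_iff.mp hab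
  refine ⟨w, ?_⟩
  rcases Relation.reflTransGen_iff_eq_or_transGen.mp hwb with rfl | hwb'
  · exact ⟨_, haw, hwb, isWalk_liftArcs hc haw, rfl⟩
  · obtain ⟨p, hp⟩ := exists_isWalk_beadify hwb'
    exact ⟨_, haw, hwb, (isWalk_liftArcs hc haw).append hp,
      List.head?_append_of_ne_nil _ (isWalk_liftArcs hc haw).1⟩

/-- Selects the parallel arc of a bead used by the edge `x → y` of `T`. -/
noncomputable def childIndex (T : DG) (x y : ℕ) : ℕ := if ∃ z, T.Adj x z ∧ z < y then 1 else 0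

lemma childIndex_lt_two (T : DG) (x y : ℕ) : childIndex T x y < 2 := by
  unfold childIndex
  split_ifs <;> omega

lemma childIndex_ne {T : DG} (hS : T.Supported) {x y y' : ℕ} (h2 : T.outDeg x ≤ 2)
    (hy : T.Adj x y) (hy' : T.Adj x y') (hne : y ≠ y') : childIndex T x y ≠ childIndex T x y' := by
  wlog hlt : y < y' generalizing y y'
  · exact (this hy' hy hne.symm (by omega)).symm
  have hmin : ¬ ∃ z, T.Adj x z ∧ z < y := by
    rintro ⟨z, hz, hzy⟩
    rcases eq_or_eq_of_adj_of_outDeg_le_two hS h2 hne hy hy' hz with rfl | rfl <;> omega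
  rw [childIndex, childIndex, if_neg hmin, if_pos ⟨y, hy, hlt⟩]
  exact zero_ne_one

theorem beadify_displays {T : DG} {M : ℕ → ℕ} (hD : IsDupTree X D)
    (hT : IsMulTree X T) (hM : DupMapping T D M) : (beadify D).Displays T := by
  obtain ⟨hMleaf, hMedge, hMlca⟩ := hM
  choose W P hW hWv hP hhead using fun u v huv =>
    exists_isWalk_beadify_head? (childIndex_lt_two T u v) (hMedge u v huv)
  have hmem : ∀ v, 0 < T.outDeg v → M v ∈ D.verts := fun v hv =>
    let ⟨w, hw⟩ := exists_adj_of_outDeg_pos hv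
    mem_verts_of_sreaches hD.supported (hMedge v w hw)
  refine ⟨fun v => 2 * M v, fun u v => if h : T.Adj u v then P u v h else [],
    fun v hv => two_mul_mem_beadify.2 ?_, fun v hv => ?_, fun u v huv => ?_,
    fun x y y' hy hy' hne => ?_⟩
  · rcases hT.nodes v hv with h | h | h
    · exact hmem v (by rw [h.2.2]; omega)
    · exact hmem v (by rw [h.2.2]; omega)
    · exact (hMleaf v h).1.1
  · exact ⟨beadify_isLeafNode_two_mul.2 (hMleaf v hv).1,
      (beadify_label_two_mul _).trans (hMleaf v hv).2⟩
  · simp only [dif_pos huv]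
    exact hP u v huv
  · simp only [dif_pos hy, dif_pos hy', hhead, liftArcs_head?]
    by_cases hd : D.IsDupNode (M x)
    · simp only [if_pos hd, ne_eq, Option.some.injEq, Prod.mk.injEq, true_and]
      exact childIndex_ne hT.supported (hT.outDeg_le_two (hT.supported x y hy).1) hy hy' hne
    · simp only [if_neg hd, ne_eq, Option.some.injEq, Prod.mk.injEq, true_and, and_true]
      intro hw
      have hWW : W x y hy = W x y' hy' := by omega
      exact ((hMlca x y y' hy hy' hne).resolve_right hd).2.2 _ (.single (hW x y hy))
        ⟨hWv x y hy, hWW ▸ hWv x y' hy'⟩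

end Beadify

section Debead

def IsTop (B : DG) (a : ℕ) : Prop := ∃ v, B.mult a v = 2
def IsBot (B : DG) (b : ℕ) : Prop := ∃ u, B.mult u b = 2

noncomputable def topOf (B : DG) (b : ℕ) : ℕ := if h : B.IsBot b then h.choose else 0
noncomputable def botOf (B : DG) (a : ℕ) : ℕ := if h : B.IsTop a then h.choose else 0

/-- Contracts every bead to its bottom node: the top is deleted and the arc entering it is
redirected to the bottom. -/
noncomputable def debead (B : DG) : DG where
  verts := B.verts.filter (¬ B.IsTop ·)
  mult := fun a b =>
    if B.IsTop a ∨ B.IsTop b then 0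
    else B.mult a b + if B.IsBot b then B.mult a (B.topOf b) else 0
  label := fun a => if B.IsTop a then none else B.label a

/-- The node of `debead B` into which `a` is contracted. -/
noncomputable def proj (B : DG) (a : ℕ) : ℕ := if B.IsTop a then B.botOf a else a

variable {X : Finset ℕ} {B : DG}

lemma topOf_spec {b : ℕ} (hb : B.IsBot b) : B.mult (B.topOf b) b = 2 := by
  rw [topOf, dif_pos hb]
  exact hb.choose_spec

lemma botOf_spec {a : ℕ} (ha : B.IsTop a) : B.mult a (B.botOf a) = 2 := by
  rw [botOf, dif_pos ha]
  exact ha.choose_spec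

lemma isTop_topOf {b : ℕ} (hb : B.IsBot b) : B.IsTop (B.topOf b) := ⟨b, topOf_spec hb⟩

lemma isBot_botOf {a : ℕ} (ha : B.IsTop a) : B.IsBot (B.botOf a) := ⟨a, botOf_spec ha⟩

lemma IsTop.isTreeNode (hB : IsBeadedTree X B) {a : ℕ} (ha : B.IsTop a) : B.IsTreeNode a := by
  obtain ⟨v, hv⟩ := ha
  have := mult_le_outDeg hB.1.supported a v
  rcases hB.1.nodes a (hB.1.supported a v (by unfold Adj; omega)).1 with h | h | h | h
  all_goals first | exact h | (have := h.2.2; omega)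

lemma IsBot.isRetic (hB : IsBeadedTree X B) {b : ℕ} (hb : B.IsBot b) : B.IsRetic b := by
  obtain ⟨u, hu⟩ := hb
  have := mult_le_inDeg hB.1.supported u b
  rcases hB.1.nodes b (hB.1.supported u b (by unfold Adj; omega)).2 with h | h | h | h
  all_goals first | exact h | (have := h.2.1; omega)

lemma IsBot.not_isTop (hB : IsBeadedTree X B) {v : ℕ} (hb : B.IsBot v) : ¬ B.IsTop v :=
  fun ht => by have := (ht.isTreeNode hB).2.1; have := (hb.isRetic hB).2.1; omega

lemma IsTop.eq_botOf (hB : IsBeadedTree X B) {a b : ℕ} (ha : B.IsTop a) (hab : B.Adj a b) :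
    b = B.botOf a := by
  by_contra hne
  have := mult_add_mult_le_outDeg hB.1.supported hne hab
    (show B.Adj a (B.botOf a) by unfold Adj; rw [botOf_spec ha]; omega)
  have := (ha.isTreeNode hB).2.2
  rw [botOf_spec ha] at *
  unfold Adj at hab
  omega

lemma IsBot.eq_topOf (hB : IsBeadedTree X B) {a b : ℕ} (hb : B.IsBot b) (hab : B.Adj a b) :
    a = B.topOf b := by
  by_contra hne
  have := mult_add_mult_le_inDeg hB.1.supported hne hab
    (show B.Adj (B.topOf b) b by unfold Adj; rw [topOf_spec hb]; omega)
  have := (hb.isRetic hB).2.1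
  rw [topOf_spec hb] at *
  unfold Adj at hab
  omega

lemma topOf_eq (hB : IsBeadedTree X B) {a b : ℕ} (h : B.mult a b = 2) : B.topOf b = a :=
  ((show B.IsBot b from ⟨a, h⟩).eq_topOf hB (by unfold Adj; omega)).symm

lemma botOf_eq (hB : IsBeadedTree X B) {a b : ℕ} (h : B.mult a b = 2) : B.botOf a = b :=
  ((show B.IsTop a from ⟨b, h⟩).eq_botOf hB (by unfold Adj; omega)).symm

lemma not_isTop_of_adj_of_not_isBot (hB : IsBeadedTree X B) {a b : ℕ} (hab : B.Adj a b)
    (hb : ¬ B.IsBot b) : ¬ B.IsTop a :=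
  fun ha => hb (ha.eq_botOf hB hab ▸ isBot_botOf ha)

lemma mult_le_one_of_not_isBot (hB : IsBeadedTree X B) {a b : ℕ} (hb : ¬ B.IsBot b) :
    B.mult a b ≤ 1 := by
  by_contra h
  exact hb ⟨a, by have := mult_le_two hB.1 a b; omega⟩

lemma mem_debead {a : ℕ} : a ∈ (debead B).verts ↔ a ∈ B.verts ∧ ¬ B.IsTop a :=
  Finset.mem_filter

lemma debead_label {a : ℕ} (ha : ¬ B.IsTop a) : (debead B).label a = B.label a := if_neg ha

lemma debead_mult {a b : ℕ} (ha : ¬ B.IsTop a) (hb : ¬ B.IsTop b) :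
    (debead B).mult a b = B.mult a b + if B.IsBot b then B.mult a (B.topOf b) else 0 :=
  if_neg (by tauto)

lemma sum_topOf_filter_isBot (hB : IsBeadedTree X B) (f : ℕ → ℕ) :
    ∑ b ∈ B.verts.filter B.IsBot, f (B.topOf b) = ∑ t ∈ B.verts.filter B.IsTop, f t := by
  refine Finset.sum_bij' (fun b _ => B.topOf b) (fun t _ => B.botOf t) (fun b hb => ?_)
    (fun t ht => ?_) (fun b hb => ?_) (fun t ht => ?_) (fun _ _ => rfl)
  · have ht := isTop_topOf (Finset.mem_filter.mp hb).2
    exact Finset.mem_filter.mpr ⟨(ht.isTreeNode hB).1, ht⟩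
  · have hb := isBot_botOf (Finset.mem_filter.mp ht).2
    exact Finset.mem_filter.mpr ⟨(hb.isRetic hB).1, hb⟩
  · exact botOf_eq hB (topOf_spec (Finset.mem_filter.mp hb).2)
  · exact topOf_eq hB (botOf_spec (Finset.mem_filter.mp ht).2)

lemma sum_filter_not_isTop_mult (hB : IsBeadedTree X B) {b : ℕ} (hb : ¬ B.IsBot b) :
    ∑ a ∈ B.verts.filter (¬ B.IsTop ·), B.mult a b = B.inDeg b :=
  Finset.sum_filter_of_ne fun _ _ hab =>
    not_isTop_of_adj_of_not_isBot hB (Nat.pos_of_ne_zero hab) hb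

lemma debead_outDeg (hB : IsBeadedTree X B) {a : ℕ} (ha : ¬ B.IsTop a) :
    (debead B).outDeg a = B.outDeg a := by
  have hsplit :
      ∑ b ∈ B.verts.filter (¬ B.IsTop ·), (if B.IsBot b then B.mult a (B.topOf b) else 0) =
        ∑ b ∈ B.verts.filter B.IsBot, B.mult a (B.topOf b) := by
    rw [← Finset.sum_filter, Finset.filter_filter]
    exact Finset.sum_congr (Finset.filter_congr fun b _ =>
      ⟨And.right, fun hb => ⟨hb.not_isTop hB, hb⟩⟩) fun _ _ => rfl
  unfold outDeg
  rw [show (debead B).verts = B.verts.filter (¬ B.IsTop ·) from rfl,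
    Finset.sum_congr rfl fun b hb => debead_mult ha (Finset.mem_filter.mp hb).2,
    Finset.sum_add_distrib, hsplit, sum_topOf_filter_isBot hB, add_comm,
    Finset.sum_filter_add_sum_filter_not]

lemma debead_inDeg (hB : IsBeadedTree X B) {b : ℕ} (hb : ¬ B.IsTop b) :
    (debead B).inDeg b = if B.IsBot b then 1 else B.inDeg b := by
  unfold inDeg
  rw [show (debead B).verts = B.verts.filter (¬ B.IsTop ·) from rfl,
    Finset.sum_congr rfl fun a ha => debead_mult (Finset.mem_filter.mp ha).2 hb,
    Finset.sum_add_distrib]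
  split_ifs with hbot
  · have hzero : ∑ a ∈ B.verts.filter (¬ B.IsTop ·), B.mult a b = 0 :=
      Finset.sum_eq_zero fun a ha => Nat.eq_zero_of_not_pos fun hab =>
        (Finset.mem_filter.mp ha).2 (hbot.eq_topOf hB hab ▸ isTop_topOf hbot)
    have htop := isTop_topOf hbot
    rw [hzero, zero_add, sum_filter_not_isTop_mult hB (fun h => h.not_isTop hB htop),
      (htop.isTreeNode hB).2.1]
  · rw [sum_filter_not_isTop_mult hB hbot, Finset.sum_const_zero, add_zero]
    rfl

lemma debead_adj_iff {a b : ℕ} :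
    (debead B).Adj a b ↔
      ¬ B.IsTop a ∧ ¬ B.IsTop b ∧ (B.Adj a b ∨ B.IsBot b ∧ B.Adj a (B.topOf b)) := by
  unfold Adj debead
  dsimp only
  by_cases htop : B.IsTop a ∨ B.IsTop b
  · rw [if_pos htop]
    tauto
  · rw [if_neg htop]
    obtain ⟨ha, hb⟩ := not_or.mp htop
    split_ifs with hbot
    · simp only [ha, hb, hbot, not_false_eq_true, true_and, Nat.add_pos_iff_pos_or_pos]
    · simp [ha, hb, hbot]

lemma debead_supported (hB : IsBeadedTree X B) : (debead B).Supported := by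
  intro a b h
  obtain ⟨ha, hb, hab | ⟨hbot, hab⟩⟩ := debead_adj_iff.mp h
  · exact ⟨mem_debead.2 ⟨(hB.1.supported a b hab).1, ha⟩,
      mem_debead.2 ⟨(hB.1.supported a b hab).2, hb⟩⟩
  · exact ⟨mem_debead.2 ⟨(hB.1.supported _ _ hab).1, ha⟩, mem_debead.2 ⟨(hbot.isRetic hB).1, hb⟩⟩

lemma sreaches_of_debead_adj {a b : ℕ} (h : (debead B).Adj a b) : B.SReaches a b := by
  obtain ⟨-, -, hab | ⟨hbot, hab⟩⟩ := debead_adj_iff.mp h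
  · exact .single hab
  · exact .head hab (.single (by unfold Adj; rw [topOf_spec hbot]; omega))

lemma debead_acyclic (hA : B.Acyclic) : (debead B).Acyclic := fun v hv =>
  hA v (Relation.TransGen.lift' id (fun _ _ => sreaches_of_debead_adj) v v hv)

lemma debead_mult_le_one (hB : IsBeadedTree X B) (a b : ℕ) : (debead B).mult a b ≤ 1 := by
  by_cases h : B.IsTop a ∨ B.IsTop b
  · rw [show (debead B).mult a b = 0 from if_pos h]
    omega
  obtain ⟨ha, hb⟩ := not_or.mp h
  rw [debead_mult ha hb]
  split_ifs with hbot
  · have hab : B.mult a b = 0 := Nat.eq_zero_of_not_pos fun hab =>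
      ha (hbot.eq_topOf hB hab ▸ isTop_topOf hbot)
    have := mult_le_one_of_not_isBot hB (a := a) fun h => h.not_isTop hB (isTop_topOf hbot)
    omega
  · simpa using mult_le_one_of_not_isBot hB hbot

lemma debead_isRoot_iff (hB : IsBeadedTree X B) {a : ℕ} : (debead B).IsRoot a ↔ B.IsRoot a := by
  by_cases ha : B.IsTop a
  · refine iff_of_false (fun h => (mem_debead.1 h.1).2 ha) fun h => ?_
    have := (ha.isTreeNode hB).2.2
    have := h.2.2
    omega
  by_cases hb : B.IsBot a
  · refine iff_of_false (fun h => ?_) fun h => ?_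
    · have := h.2.1
      rw [debead_inDeg hB ha, if_pos hb] at this
      omega
    · have := (hb.isRetic hB).2.1
      have := h.2.1
      omega
  · simp only [IsRoot, mem_debead, debead_inDeg hB ha, debead_outDeg hB ha, if_neg hb, ha,
      not_false_eq_true, and_true]

lemma debead_isLeafNode_iff (hB : IsBeadedTree X B) {a : ℕ} :
    (debead B).IsLeafNode a ↔ B.IsLeafNode a := by
  by_cases ha : B.IsTop a
  · refine iff_of_false (fun h => (mem_debead.1 h.1).2 ha) fun h => ?_
    have := (ha.isTreeNode hB).2.2
    have := h.2.2
    omega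
  by_cases hb : B.IsBot a
  · refine iff_of_false (fun h => ?_) fun h => ?_
    · have := h.2.2
      rw [debead_outDeg hB ha, (hb.isRetic hB).2.2] at this
      omega
    · have := (hb.isRetic hB).2.1
      have := h.2.1
      omega
  · simp only [IsLeafNode, mem_debead, debead_inDeg hB ha, debead_outDeg hB ha, if_neg hb, ha,
      not_false_eq_true, and_true]

lemma debead_isTreeNode (hB : IsBeadedTree X B) {a : ℕ} (h : B.IsTreeNode a)
    (ha : ¬ B.IsTop a) : (debead B).IsTreeNode a := by
  have hb : ¬ B.IsBot a := fun hb => by have := (hb.isRetic hB).2.1; have := h.2.1; omega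
  refine ⟨mem_debead.2 ⟨h.1, ha⟩, ?_, ?_⟩
  · rw [debead_inDeg hB ha, if_neg hb, h.2.1]
  · rw [debead_outDeg hB ha, h.2.2]

lemma debead_isDupNode_iff (hB : IsBeadedTree X B) {a : ℕ} :
    (debead B).IsDupNode a ↔ B.IsBot a := by
  constructor
  · rintro ⟨hmem, hin, hout⟩
    obtain ⟨hav, ha⟩ := mem_debead.1 hmem
    rw [debead_inDeg hB ha] at hin
    rw [debead_outDeg hB ha] at hout
    by_contra hb
    rw [if_neg hb] at hin
    rcases hB.1.nodes a hav with h | h | h | h <;> have := h.2.1 <;> have := h.2.2 <;> omega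
  · intro hb
    have ha := hb.not_isTop hB
    refine ⟨mem_debead.2 ⟨(hb.isRetic hB).1, ha⟩, ?_, ?_⟩
    · rw [debead_inDeg hB ha, if_pos hb]
    · rw [debead_outDeg hB ha, (hb.isRetic hB).2.2]

lemma debead_label_eq_some (hB : IsBeadedTree X B) {a x : ℕ} :
    (debead B).label a = some x ↔ B.label a = some x := by
  by_cases ha : B.IsTop a
  · rw [show (debead B).label a = none from if_pos ha]
    refine iff_of_false nofun fun hx => ?_
    have := ((hB.1.labels a).1 ⟨x, hx⟩).2.2
    have := (ha.isTreeNode hB).2.2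
    omega
  · rw [debead_label ha]

theorem debead_isDupTree (hB : IsBeadedTree X B) : IsDupTree X (debead B) := by
  obtain ⟨r, hr, hru⟩ := hB.1.root
  refine ⟨⟨r, (debead_isRoot_iff hB).2 hr, fun w hw => hru w ((debead_isRoot_iff hB).1 hw)⟩,
    fun w hw => ?_, debead_acyclic hB.1.acyclic, debead_mult_le_one hB, debead_supported hB,
    fun w => ?_, fun w x hx => hB.1.labelsSub w x ((debead_label_eq_some hB).1 hx),
    fun x hx => ?_⟩
  · obtain ⟨hwv, hwt⟩ := mem_debead.1 hw
    rcases hB.1.nodes w hwv with h | h | h | h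
    · exact Or.inl ((debead_isRoot_iff hB).2 h)
    · exact Or.inr (Or.inl (debead_isTreeNode hB h hwt))
    · exact Or.inr (Or.inr (Or.inl ((debead_isDupNode_iff hB).2 (hB.2 w hwv h.2.1))))
    · exact Or.inr (Or.inr (Or.inr ((debead_isLeafNode_iff hB).2 h)))
  · simp only [debead_label_eq_some hB, debead_isLeafNode_iff hB]
    exact hB.1.labels w
  · simp only [debead_label_eq_some hB]
    exact hB.1.labelsOnto x hx

theorem debead_dupNum (hB : IsBeadedTree X B) : (debead B).dupNum = B.beadNum := by
  unfold dupNum beadNum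
  congr 1
  ext w
  rw [Finset.mem_filter, Finset.mem_filter]
  exact (debead_isDupNode_iff hB).trans
    ⟨fun hb => ⟨(hb.isRetic hB).1, _, ((isTop_topOf hb).isTreeNode hB).1, topOf_spec hb⟩,
      fun ⟨_, u, _, hu⟩ => ⟨u, hu⟩⟩

lemma proj_of_not_isTop {a : ℕ} (h : ¬ B.IsTop a) : B.proj a = a := if_neg h

lemma proj_of_isTop {a : ℕ} (h : B.IsTop a) : B.proj a = B.botOf a := if_pos h

lemma debead_adj_proj (hB : IsBeadedTree X B) {a b : ℕ} (ha : ¬ B.IsTop a) (hab : B.Adj a b) :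
    (debead B).Adj a (B.proj b) := by
  by_cases hb : B.IsTop b
  · have hbot := isBot_botOf hb
    rw [proj_of_isTop hb, debead_adj_iff, topOf_eq hB (botOf_spec hb)]
    exact ⟨ha, hbot.not_isTop hB, Or.inr ⟨hbot, hab⟩⟩
  · rw [proj_of_not_isTop hb, debead_adj_iff]
    exact ⟨ha, hb, Or.inl hab⟩

lemma debead_reaches_proj (hB : IsBeadedTree X B) {a b : ℕ} (h : B.Reaches a b) :
    (debead B).Reaches (B.proj a) (B.proj b) := by
  induction h with
  | refl => exact .refl
  | @tail b c _ hbc ih =>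
    by_cases hb : B.IsTop b
    · rwa [hb.eq_botOf hB hbc, proj_of_not_isTop ((isBot_botOf hb).not_isTop hB),
        ← proj_of_isTop hb]
    · rw [proj_of_not_isTop hb] at ih
      exact ih.tail (debead_adj_proj hB hb hbc)

lemma debead_sreaches_proj (hB : IsBeadedTree X B) {a b : ℕ} (h : B.SReaches a b)
    (hb : ¬ B.IsBot b) : (debead B).SReaches (B.proj a) (B.proj b) := by
  obtain ⟨c, hac, hcb⟩ := Relation.TransGen.tail'_iff.mp h
  have hc := not_isTop_of_adj_of_not_isBot hB hcb hb
  have hac' := debead_reaches_proj hB hac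
  rw [proj_of_not_isTop hc] at hac'
  exact .tail' hac' (debead_adj_proj hB hc hcb)

lemma proj_ne_proj (hB : IsBeadedTree X B) {a c c' : ℕ} (ha : ¬ B.IsTop a) (hc : B.Adj a c)
    (hc' : B.Adj a c') (hne : c ≠ c') : B.proj c ≠ B.proj c' := by
  have key : ∀ {c c'}, B.Adj a c' → B.IsTop c → B.proj c = B.proj c' → c = c' := by
    intro c c' hc' htc hpp
    rw [proj_of_isTop htc] at hpp
    by_cases htc' : B.IsTop c'
    · rw [proj_of_isTop htc'] at hpp
      rw [← topOf_eq hB (botOf_spec htc), ← topOf_eq hB (botOf_spec htc'), hpp]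
    · rw [proj_of_not_isTop htc'] at hpp
      subst hpp
      have hac : a = c := ((isBot_botOf htc).eq_topOf hB hc').trans (topOf_eq hB (botOf_spec htc))
      exact absurd (hac ▸ htc) ha
  intro hpp
  by_cases htc : B.IsTop c
  · exact hne (key hc' htc hpp)
  by_cases htc' : B.IsTop c'
  · exact hne (key hc htc' hpp.symm).symm
  rw [proj_of_not_isTop htc, proj_of_not_isTop htc'] at hpp
  exact hne hpp

lemma ne_of_arcOK_of_not_isTop (hB : IsBeadedTree X B) {a : ℕ} (ha : ¬ B.IsTop a) {e f : Arc}
    (he : B.ArcOK e) (hf : B.ArcOK f) (hea : e.1 = a) (hfa : f.1 = a) (hef : e ≠ f) :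
    e.2.1 ≠ f.2.1 := by
  intro hc
  have hi : e.2.2 ≠ f.2.2 := fun hi => hef (Prod.ext (hea.trans hfa.symm) (Prod.ext hc hi))
  have := mult_le_two hB.1 a e.2.1
  unfold ArcOK at he hf
  rw [hea] at he
  rw [hfa, ← hc] at hf
  exact ha ⟨e.2.1, by omega⟩

lemma WeakEmbedding.not_isBot {Y : Finset ℕ} {T : DG} {h : ℕ → ℕ} {hE : ℕ → ℕ → List Arc}
    (hemb : WeakEmbedding T B h hE) (hB : IsBeadedTree X B) (hT : IsMulTree Y T) {x y : ℕ}
    (hxy : T.Adj x y) : ¬ B.IsBot (h y) := by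
  intro hbot
  rcases hT.nodes y (hT.supported x y hxy).2 with hr | ht | hl
  · have := mult_le_inDeg hT.supported x y
    have := hr.2.1
    unfold Adj at hxy
    omega
  · obtain ⟨z, z', hzz', hz, hz'⟩ := exists_ne_adj_of_outDeg_eq_two hT.supported hT.simple ht.2.2
    obtain ⟨e, he, hok, hea, -⟩ := (hemb.2.2.1 y z hz).exists_head?
    obtain ⟨f, hf, hok', hfa, -⟩ := (hemb.2.2.1 y z' hz').exists_head?
    refine hemb.2.2.2 y z z' hz hz' hzz' ?_
    rw [he, hf, eq_of_arcOK_of_outDeg_eq_one hB.1.supported (hbot.isRetic hB).2.2 hok hok' hea hfa]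
  · have := (hemb.2.1 y hl).1.2.1
    have := (hbot.isRetic hB).2.1
    omega

theorem debead_consistentWith {Y : Finset ℕ} {T : DG} (hB : IsBeadedTree X B)
    (hT : IsMulTree Y T) (hdisp : B.Displays T) : (debead B).ConsistentWith T := by
  obtain ⟨h, hE, hemb⟩ := hdisp
  have ⟨_, hleaf, hwalk, hhead⟩ := hemb
  refine ⟨fun v => B.proj (h v), fun v hv => ?_, fun u v huv => ?_, fun x y y' hy hy' hne => ?_⟩
  · obtain ⟨hl, hlab⟩ := hleaf v hv
    have ht : ¬ B.IsTop (h v) := fun ht => by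
      have := (ht.isTreeNode hB).2.2
      have := hl.2.2
      omega
    dsimp only
    rw [proj_of_not_isTop ht]
    exact ⟨(debead_isLeafNode_iff hB).2 hl, (debead_label ht).trans hlab⟩
  · exact debead_sreaches_proj hB (hwalk u v huv).sreaches (hemb.not_isBot hB hT huv)
  by_cases ht : B.IsTop (h x)
  · right
    dsimp only
    rw [proj_of_isTop ht]
    exact (debead_isDupNode_iff hB).2 (isBot_botOf ht)
  left
  dsimp only
  rw [proj_of_not_isTop ht]
  obtain ⟨e, he, hok, hea, hey⟩ := (hwalk x y hy).exists_head?
  obtain ⟨f, hf, hok', hfa, hfy⟩ := (hwalk x y' hy').exists_head?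
  have hef : e ≠ f := fun hef => hhead x y y' hy hy' hne (by rw [he, hf, hef])
  have hc : B.Adj (h x) e.2.1 := hea ▸ hok.adj
  have hc' : B.Adj (h x) f.2.1 := hfa ▸ hok'.adj
  exact isLCA_of_adj_of_adj (debead_supported hB)
    (fun _ hv => (debead_isDupTree hB).inDeg_le_one hv)
    (debead_acyclic hB.1.acyclic) (debead_adj_proj hB ht hc) (debead_adj_proj hB ht hc')
    (proj_ne_proj hB ht hc hc' (ne_of_arcOK_of_not_isTop hB ht hok hok' hea hfa hef))
    (debead_reaches_proj hB hey) (debead_reaches_proj hB hfy)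

end Debead

end DG

/-- Lemma 1: there is a duplication tree on `X` with exactly `k`
duplication nodes consistent with every MUL-tree in `𝒯` iff there is a beaded
tree on `X` with exactly `k` beads weakly displaying every MUL-tree in `𝒯`. -/
theorem duplication_tree_iff_beaded_tree (X : Finset ℕ) (Ts : Set DG)
    (hT : ∀ T ∈ Ts, DG.IsMulTree X T) (k : ℕ) :
    (∃ D : DG, DG.IsDupTree X D ∧ D.dupNum = k ∧ ∀ T ∈ Ts, D.ConsistentWith T) ↔
    (∃ B : DG, DG.IsBeadedTree X B ∧ B.beadNum = k ∧ ∀ T ∈ Ts, B.Displays T) := by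
  constructor
  · rintro ⟨D, hD, rfl, hcons⟩
    refine ⟨D.beadify, DG.beadify_isBeadedTree hD, DG.beadify_beadNum hD, fun T hTs => ?_⟩
    obtain ⟨M, hM⟩ := hcons T hTs
    exact DG.beadify_displays hD (hT T hTs) hM
  · rintro ⟨B, hB, rfl, hdisp⟩
    exact ⟨B.debead, DG.debead_isDupTree hB, DG.debead_dupNum hB,
      fun T hTs => DG.debead_consistentWith hB (hT T hTs) (hdisp T hTs)⟩
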